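/- Let Γ, N be groups, φ : Γ → Aut(N) a homomorphism, and S ⊆ Γ, T ⊆ N symmetric subsets. Then inside the semidirect product N ⋊_φ Γ, the ball of radius n with respect to S ∪ T satisfies B_{S∪T}(n) ⊆ B_{C(S,T,n)}(n) · B_S(n), where C(S,T,n) = { w⁻¹ t w : w ∈ B_S(n−1), t ∈ T } ⊆ N. -/
import Mathlib


open scoped Pointwise

/-- The ball of radius `n` in the word metric with respect to a set `S`. -/
def wordBall {G : Type*} [Group G] (S : Set G) (n : ℕ) : Set G :=
  {x | ∃ l : List G, l.length ≤ n ∧ (∀ y ∈ l, y ∈ S ∪ S⁻¹) ∧ l.prod = x}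

lemma one_mem_wordBall {G : Type*} [Group G] (S : Set G) (n : ℕ) :
    (1 : G) ∈ wordBall S n := ⟨[], by simp, by simp, by simp⟩

lemma wordBall_mono {G : Type*} [Group G] (S : Set G) {m n : ℕ} (h : m ≤ n) :
    wordBall S m ⊆ wordBall S n := fun _ ⟨l, hl, h2, h3⟩ => ⟨l, hl.trans h, h2, h3⟩

lemma mem_wordBall_of_mem {G : Type*} [Group G] {S : Set G} {x : G} (hx : x ∈ S)
    {n : ℕ} (hn : 1 ≤ n) : x ∈ wordBall S n :=
  ⟨[x], by simpa, by simp [hx], by simp⟩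

lemma mul_mem_wordBall {G : Type*} [Group G] {S : Set G} {x y : G} {m n : ℕ}
    (hx : x ∈ wordBall S m) (hy : y ∈ wordBall S n) : x * y ∈ wordBall S (m + n) := by
  obtain ⟨l1, hl1, h1, rfl⟩ := hx
  obtain ⟨l2, hl2, h2, rfl⟩ := hy
  refine ⟨l1 ++ l2, by simp; omega, ?_, by simp⟩
  intro y hy
  rcases List.mem_append.mp hy with h | h
  exacts [h1 y h, h2 y h]

lemma inv_mem_wordBall {G : Type*} [Group G] {S : Set G} {x : G} {n : ℕ}
    (hx : x ∈ wordBall S n) : x⁻¹ ∈ wordBall S n := by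
  obtain ⟨l, hl, h1, rfl⟩ := hx
  refine ⟨(l.map (·⁻¹)).reverse, by simpa using hl, ?_, (List.prod_inv_reverse l).symm⟩
  intro y hy
  simp only [List.mem_reverse, List.mem_map] at hy
  obtain ⟨z, hz, rfl⟩ := hy
  rcases h1 z hz with h|h
  · exact Or.inr (by simpa using h)
  · exact Or.inl (by simpa using h)

lemma semidirect_aux {N Γ : Type*} [Group N] [Group Γ] (φ : Γ →* MulAut N)
    (S : Set Γ) (T : Set N) (n : ℕ) :
    ∀ l : List (N ⋊[φ] Γ),
      (∀ y ∈ l, (∃ s ∈ S, y = SemidirectProduct.inr s) ∨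
        (∃ t ∈ T, y = SemidirectProduct.inl t)) → l.length ≤ n →
      ∃ c ∈ wordBall {c : N ⋊[φ] Γ | ∃ w ∈ wordBall S (n - 1), ∃ t ∈ T,
          c = (SemidirectProduct.inr w)⁻¹ * SemidirectProduct.inl t *
            SemidirectProduct.inr w} l.length,
        ∃ w ∈ wordBall S l.length, l.prod = c * SemidirectProduct.inr w := by
  intro l
  induction l using List.reverseRecOn with
  | nil =>
    intro _ _
    exact ⟨1, one_mem_wordBall _ _, 1, one_mem_wordBall _ _, by simp⟩
  | append_singleton l g ih =>
    intro hmem hlen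
    have hlen' : l.length ≤ n - 1 := by simp at hlen; omega
    obtain ⟨c, hc, w, hw, hprod⟩ := ih (fun y hy => hmem y (by simp [hy]))
      (le_trans hlen' (Nat.sub_le n 1))
    rcases hmem g (by simp) with ⟨s, hs, rfl⟩ | ⟨t, ht, rfl⟩
    · refine ⟨c, wordBall_mono _ (by simp) hc, w * s, ?_, ?_⟩
      · simpa using mul_mem_wordBall hw (mem_wordBall_of_mem hs le_rfl)
      · simp [hprod, mul_assoc, map_mul]
    · have hwinv : w⁻¹ ∈ wordBall S (n - 1) :=
        inv_mem_wordBall (wordBall_mono _ hlen' hw)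
      have hmemC : (SemidirectProduct.inr w⁻¹)⁻¹ * SemidirectProduct.inl t *
          SemidirectProduct.inr w⁻¹ ∈ {c : N ⋊[φ] Γ | ∃ w ∈ wordBall S (n - 1), ∃ t ∈ T,
            c = (SemidirectProduct.inr w)⁻¹ * SemidirectProduct.inl t *
              SemidirectProduct.inr w} := ⟨w⁻¹, hwinv, t, ht, rfl⟩
      refine ⟨c * ((SemidirectProduct.inr w⁻¹)⁻¹ * SemidirectProduct.inl t *
          SemidirectProduct.inr w⁻¹), ?_, w, wordBall_mono _ (by simp) hw, ?_⟩
      · simpa using mul_mem_wordBall hc (mem_wordBall_of_mem hmemC le_rfl)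
      · rw [List.prod_append, hprod]
        simp [map_inv, mul_assoc]

/-- in a semidirect product `N ⋊_φ Γ`, with `S ⊆ Γ` and `T ⊆ N`
symmetric, the ball `B_{S∪T}(n)` is contained in `B_{C(S,T,n)}(n) · B_S(n)`,
where `C(S,T,n) = { w⁻¹ t w : w ∈ B_S(n−1), t ∈ T } ⊆ N`. -/
theorem semidirect_ball_subset {N Γ : Type*} [Group N] [Group Γ] (φ : Γ →* MulAut N)
    (S : Set Γ) (T : Set N) (hS : S⁻¹ = S) (hT : T⁻¹ = T) (n : ℕ) :
    wordBall ((⇑SemidirectProduct.inr '' S) ∪ (⇑SemidirectProduct.inl '' T) :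
        Set (N ⋊[φ] Γ)) n ⊆
      wordBall {c : N ⋊[φ] Γ | ∃ w ∈ wordBall S (n - 1), ∃ t ∈ T,
          c = (SemidirectProduct.inr w)⁻¹ * SemidirectProduct.inl t *
            SemidirectProduct.inr w} n *
        (⇑SemidirectProduct.inr '' wordBall S n) := by
  intro x hx
  obtain ⟨l, hlen, hmem, rfl⟩ := hx
  have hmem' : ∀ y ∈ l, (∃ s ∈ S, y = SemidirectProduct.inr s) ∨
      (∃ t ∈ T, y = SemidirectProduct.inl t) := by
    intro y hy
    rcases hmem y hy with h | h
    · rcases h with ⟨s, hs, rfl⟩ | ⟨t, ht, rfl⟩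
      exacts [Or.inl ⟨s, hs, rfl⟩, Or.inr ⟨t, ht, rfl⟩]
    · rw [Set.mem_inv] at h
      rcases h with ⟨s, hs, hse⟩ | ⟨t, ht, hte⟩
      · refine Or.inl ⟨s⁻¹, by rw [← hS]; exact Set.inv_mem_inv.mpr hs, ?_⟩
        rw [map_inv, hse, inv_inv]
      · refine Or.inr ⟨t⁻¹, by rw [← hT]; exact Set.inv_mem_inv.mpr ht, ?_⟩
        rw [map_inv, hte, inv_inv]
  obtain ⟨c, hc, w, hw, hprod⟩ := semidirect_aux φ S T n l hmem' hlen
  rw [hprod]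
  exact Set.mul_mem_mul (wordBall_mono _ hlen hc) ⟨w, wordBall_mono _ hlen hw, rfl⟩
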